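/- arXiv:2503.21715 — 2 statements merged into one kernel-verified Lean document; each statement's English description precedes it below -/
import Mathlib

section
/- Let U_1, U_2, U_3 be i.i.d. uniform random variables on [0,1], and set W_1 = 2 - 3|U_2 - U_1| - 6 U_1(1 - U_1) and W_2 = 2 - 3|U_3 - U_2| - 6 U_2(1 - U_2). Then E[W_1 W_2] = -1/20. -/
/-!
Condition on the middle variable `U 1 = y`. Given `y`, the factor `W₁` depends only on `U 0` and
`W₂` only on `U 2`, so the conditional expectation of `W₁ W₂` factorises into
`(∫ W(x, y) dx) (∫ W(y, z) dz) = -(3y² - 3y + 1/2)²`,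
and `∫₀¹ (3y² - 3y + 1/2)² dy = 1/20`.
-/

open MeasureTheory ProbabilityTheory intervalIntegral Set
open scoped Interval

theorem ProbabilityTheory.iIndepFun.map_prodMk_prodMk_eq_prod
    {Ω ι : Type*} [MeasurableSpace Ω] {P : Measure Ω} [IsFiniteMeasure P]
    {β : ι → Type*} [∀ i, MeasurableSpace (β i)] {U : ∀ i, Ω → β i}
    (hindep : iIndepFun U P) (hmeas : ∀ i, Measurable (U i))
    {i j k : ι} (hij : i ≠ j) (hik : i ≠ k) (hjk : j ≠ k) :
    P.map (fun ω => (U i ω, U j ω, U k ω))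
      = (P.map (U i)).prod ((P.map (U j)).prod (P.map (U k))) := by
  rw [((hindep.indepFun_prodMk hmeas j k i hij.symm hik.symm).symm).map_prod_eq_prod_map_map
      (hmeas i).aemeasurable ((hmeas j).prodMk (hmeas k)).aemeasurable,
    (hindep.indepFun hjk).map_prod_eq_prod_map_map (hmeas j).aemeasurable (hmeas k).aemeasurable]

theorem MeasureTheory.integral_prod_prod_mul
    {α β γ : Type*} [MeasurableSpace α] [MeasurableSpace β] [MeasurableSpace γ]
    {μ : Measure α} {ν : Measure β} {ρ : Measure γ} [SFinite μ] [SFinite ν] [SFinite ρ]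
    {L : Type*} [RCLike L] (f : α → β → L) (g : α → γ → L)
    (hint : Integrable (fun p : α × β × γ => f p.1 p.2.1 * g p.1 p.2.2)
      (μ.prod (ν.prod ρ))) :
    ∫ p, f p.1 p.2.1 * g p.1 p.2.2 ∂(μ.prod (ν.prod ρ))
      = ∫ y, (∫ x, f y x ∂ν) * (∫ z, g y z ∂ρ) ∂μ := by
  rw [integral_prod _ hint]
  simp only [integral_prod_mul]

theorem setIntegral_Icc_eq_intervalIntegral {E : Type*} [NormedAddCommGroup E] [NormedSpace ℝ E]
    {a b : ℝ} (hab : a ≤ b) (f : ℝ → E) :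
    ∫ x in Icc a b, f x = ∫ x in a..b, f x := by
  rw [integral_Icc_eq_integral_Ioc, integral_of_le hab]

theorem Continuous.integrable_restrict_Icc_prod_prod {E : Type*} [NormedAddCommGroup E]
    {F : ℝ × ℝ × ℝ → E} (hF : Continuous F) (a b : ℝ) :
    Integrable F ((volume.restrict (Icc a b)).prod
      ((volume.restrict (Icc a b)).prod (volume.restrict (Icc a b)))) := by
  rw [Measure.prod_restrict, Measure.prod_restrict, ← Measure.volume_eq_prod,
    ← Measure.volume_eq_prod]
  exact hF.continuousOn.integrableOn_compact (isCompact_Icc.prod (isCompact_Icc.prod isCompact_Icc))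

theorem integral_abs_sub_of_mem_Icc {y : ℝ} (hy : y ∈ Icc (0 : ℝ) 1) :
    ∫ x in (0 : ℝ)..1, |x - y| = y ^ 2 - y + 1 / 2 := by
  have hint (a b : ℝ) : IntervalIntegrable (fun x => |x - y|) volume a b :=
    (by fun_prop : Continuous fun x : ℝ => |x - y|).intervalIntegrable a b
  have hhalf (b : ℝ) : ∫ x in Ι y b, |x - y| = (b - y) ^ 2 / 2 := by
    simpa [one_add_one_eq_two] using integral_pow_abs_sub_uIoc (a := y) (b := b) (n := 1)
  rw [← integral_add_adjacent_intervals (hint 0 y) (hint y 1), integral_of_le hy.1,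
    integral_of_le hy.2, ← uIoc_of_ge hy.1, ← uIoc_of_le hy.2, hhalf, hhalf]
  ring

/-- `W₁ = W (U 0) (U 1)` and `W₂ = W (U 1) (U 2)`. -/
def W (u v : ℝ) : ℝ := 2 - 3 * |v - u| - 6 * u * (1 - u)

theorem integral_W_left {y : ℝ} (hy : y ∈ Icc (0 : ℝ) 1) :
    ∫ x in (0 : ℝ)..1, W x y = -(3 * y ^ 2 - 3 * y + 1 / 2) := by
  have hquad : ∫ x in (0 : ℝ)..1, 6 * x * (1 - x) = 1 := by
    ring_nf
    simp (disch := apply Continuous.intervalIntegrable; fun_prop)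
      [intervalIntegral.integral_sub, intervalIntegral.integral_mul_const]
    norm_num
  have habs : ∫ x in (0 : ℝ)..1, |y - x| = y ^ 2 - y + 1 / 2 := by
    simpa only [abs_sub_comm] using integral_abs_sub_of_mem_Icc hy
  simp (disch := apply Continuous.intervalIntegrable; fun_prop) only [W,
    intervalIntegral.integral_sub, intervalIntegral.integral_const_mul,
    intervalIntegral.integral_const, smul_eq_mul, habs, hquad]
  ring

theorem integral_W_right {y : ℝ} (hy : y ∈ Icc (0 : ℝ) 1) :
    ∫ z in (0 : ℝ)..1, W y z = 3 * y ^ 2 - 3 * y + 1 / 2 := by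
  simp (disch := apply Continuous.intervalIntegrable; fun_prop) only [W,
    intervalIntegral.integral_sub, intervalIntegral.integral_const_mul,
    intervalIntegral.integral_const, smul_eq_mul, integral_abs_sub_of_mem_Icc hy]
  ring

theorem integral_sq_quadratic :
    ∫ y in (0 : ℝ)..1, (3 * y ^ 2 - 3 * y + 1 / 2) ^ 2 = 1 / 20 := by
  ring_nf
  simp (disch := apply Continuous.intervalIntegrable; fun_prop)
    [intervalIntegral.integral_sub, intervalIntegral.integral_mul_const]
  norm_num

/-- If `U 0, U 1, U 2` are i.i.d. uniform on `[0,1]`,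
`W₁ = 2 - 3|U 1 - U 0| - 6 U 0 (1 - U 0)` and `W₂ = 2 - 3|U 2 - U 1| - 6 U 1 (1 - U 1)`,
then `E[W₁ W₂] = -1/20`. -/
theorem expectation_W1_W2
    {Ω : Type*} [MeasurableSpace Ω] (P : Measure Ω) [IsProbabilityMeasure P]
    (U : Fin 3 → Ω → ℝ) (hmeas : ∀ i, Measurable (U i))
    (hindep : iIndepFun U P)
    (hunif : ∀ i, Measure.map (U i) P = volume.restrict (Set.Icc (0:ℝ) 1)) :
    ∫ ω, (2 - 3 * |U 1 ω - U 0 ω| - 6 * U 0 ω * (1 - U 0 ω))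
        * (2 - 3 * |U 2 ω - U 1 ω| - 6 * U 1 ω * (1 - U 1 ω)) ∂P = -(1 / 20) := by
  set μ : Measure ℝ := volume.restrict (Icc 0 1)
  set F : ℝ × ℝ × ℝ → ℝ := fun p => W p.2.1 p.1 * W p.1 p.2.2
  have hF : Continuous F := by
    simp only [F, W]
    fun_prop
  have hlaw : P.map (fun ω => (U 1 ω, U 0 ω, U 2 ω)) = μ.prod (μ.prod μ) := by
    rw [hindep.map_prodMk_prodMk_eq_prod hmeas (by decide) (by decide) (by decide),
      hunif, hunif, hunif]
  calc _ = ∫ p, F p ∂(μ.prod (μ.prod μ)) := by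
        rw [← hlaw, integral_map ((hmeas 1).prodMk ((hmeas 0).prodMk (hmeas 2))).aemeasurable
          hF.aestronglyMeasurable]
        rfl
    _ = ∫ y in Icc 0 1, (∫ x in Icc 0 1, W x y) * (∫ z in Icc 0 1, W y z) :=
        integral_prod_prod_mul (fun y x => W x y) W (hF.integrable_restrict_Icc_prod_prod 0 1)
    _ = ∫ y in Icc 0 1, -(3 * y ^ 2 - 3 * y + 1 / 2) ^ 2 := by
        refine setIntegral_congr_fun measurableSet_Icc fun y hy => ?_
        simp only [setIntegral_Icc_eq_intervalIntegral zero_le_one, integral_W_left hy,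
          integral_W_right hy]
        ring
    _ = -(1 / 20) := by
        rw [setIntegral_Icc_eq_intervalIntegral zero_le_one, intervalIntegral.integral_neg,
          integral_sq_quadratic]
end

section
/- Let U_1, U_2 be i.i.d. uniform random variables on [0,1] and W_1 = 2 - 3|U_2 - U_1| - 6 U_1(1 - U_1). Then E[W_1^4] = 3/5. -/
/-!
By independence the law of `(U 0, U 1)` is Lebesgue measure on the unit square, so the
expectation is the double integral `∫₀¹ ∫₀¹ (a(x) - 3|y - x|)⁴ dy dx`, where
`a(x) = 2 - 6x(1 - x)`.
Splitting the inner integral at `y = x` turns it into two integrals of `(a - 3t)⁴` over `[0, x]`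
and `[0, 1 - x]`, hence into an explicit polynomial in `x`, whose integral over `[0, 1]` is `3/5`.
-/

open MeasureTheory ProbabilityTheory Set

theorem ProbabilityTheory.IndepFun.integral_comp_prodMk {Ω α β E : Type*} [MeasurableSpace Ω]
    [MeasurableSpace α] [MeasurableSpace β] [NormedAddCommGroup E] [NormedSpace ℝ E]
    {P : Measure Ω} [IsFiniteMeasure P] {X : Ω → α} {Y : Ω → β} (hXY : X ⟂ᵢ[P] Y)
    (hX : AEMeasurable X P) (hY : AEMeasurable Y P) {f : α × β → E}
    (hf : AEStronglyMeasurable f ((P.map X).prod (P.map Y))) :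
    ∫ ω, f (X ω, Y ω) ∂P = ∫ p, f p ∂((P.map X).prod (P.map Y)) := by
  rw [← hXY.map_prod_eq_prod_map_map hX hY] at hf ⊢
  exact (integral_map (hX.prodMk hY) hf).symm

theorem integral_prod_restrict_Icc {E : Type*} [NormedAddCommGroup E] [NormedSpace ℝ E]
    {f : ℝ × ℝ → E} (hf : Continuous f) {a b c d : ℝ} (hab : a ≤ b) (hcd : c ≤ d) :
    ∫ p, f p ∂((volume.restrict (Icc a b)).prod (volume.restrict (Icc c d)))
      = ∫ x in a..b, ∫ y in c..d, f (x, y) := by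
  have hint : Integrable f ((volume.restrict (Icc a b)).prod (volume.restrict (Icc c d))) := by
    rw [Measure.prod_restrict, ← Measure.volume_eq_prod]
    exact hf.continuousOn.integrableOn_compact (isCompact_Icc.prod isCompact_Icc)
  simp only [integral_prod _ hint, intervalIntegral.integral_of_le hab,
    intervalIntegral.integral_of_le hcd, integral_Icc_eq_integral_Ioc]

theorem integral_comp_abs_sub {E : Type*} [NormedAddCommGroup E] [NormedSpace ℝ E]
    {g : ℝ → E} (hg : Continuous g) {a b x : ℝ} (hax : a ≤ x) (hxb : x ≤ b) :
    ∫ y in a..b, g |y - x| = (∫ t in 0..x - a, g t) + ∫ t in 0..b - x, g t := by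
  have hint : ∀ u v, IntervalIntegrable (fun y => g |y - x|) volume u v :=
    fun u v => (by fun_prop : Continuous fun y => g |y - x|).intervalIntegrable u v
  rw [← intervalIntegral.integral_add_adjacent_intervals (hint a x) (hint x b)]
  congr 1
  · have hleft : EqOn (fun y => g |y - x|) (fun y => g (x - y)) (uIcc a x) := by
      intro y hy
      rw [uIcc_of_le hax] at hy
      simp only [abs_of_nonpos (sub_nonpos.2 hy.2), neg_sub]
    rw [intervalIntegral.integral_congr hleft,
      intervalIntegral.integral_comp_sub_left (fun t => g t), sub_self]
  · have hright : EqOn (fun y => g |y - x|) (fun y => g (y - x)) (uIcc x b) := by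
      intro y hy
      rw [uIcc_of_le hxb] at hy
      simp only [abs_of_nonneg (sub_nonneg.2 hy.1)]
    rw [intervalIntegral.integral_congr hright,
      intervalIntegral.integral_comp_sub_right (fun t => g t), sub_self]

theorem integral_sub_mul_pow (a c : ℝ) {b : ℝ} (hb : b ≠ 0) (n : ℕ) :
    ∫ t in (0:ℝ)..c, (a - b * t) ^ n
      = (a ^ (n + 1) - (a - b * c) ^ (n + 1)) / (b * (n + 1)) := by
  rw [intervalIntegral.integral_comp_sub_mul (fun t => t ^ n) hb, integral_pow]
  simp only [mul_zero, sub_zero, smul_eq_mul]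
  field_simp

theorem integral_pow_sub_mul_abs_sub (a : ℝ) {b : ℝ} (hb : b ≠ 0) (n : ℕ) {x : ℝ}
    (hx : x ∈ Icc (0:ℝ) 1) :
    ∫ y in (0:ℝ)..1, (a - b * |y - x|) ^ n
      = (2 * a ^ (n + 1) - (a - b * x) ^ (n + 1) - (a - b * (1 - x)) ^ (n + 1))
          / (b * (n + 1)) := by
  have hg : Continuous fun t : ℝ => (a - b * t) ^ n := by fun_prop
  rw [integral_comp_abs_sub hg hx.1 hx.2, sub_zero, integral_sub_mul_pow _ _ hb,
    integral_sub_mul_pow _ _ hb]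
  ring

/-- If `U 0, U 1` are i.i.d. uniform on `[0,1]` and
`W₁ = 2 - 3|U 1 - U 0| - 6 U 0 (1 - U 0)`, then `E[W₁⁴] = 3/5`. -/
theorem expectation_W_pow_four
    {Ω : Type*} [MeasurableSpace Ω] (P : Measure Ω) [IsProbabilityMeasure P]
    (U : Fin 2 → Ω → ℝ) (hmeas : ∀ i, Measurable (U i))
    (hindep : iIndepFun U P)
    (hunif : ∀ i, Measure.map (U i) P = volume.restrict (Set.Icc (0:ℝ) 1)) :
    ∫ ω, (2 - 3 * |U 1 ω - U 0 ω| - 6 * U 0 ω * (1 - U 0 ω)) ^ 4 ∂P = 3 / 5 := by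
  have hcont : Continuous fun p : ℝ × ℝ => (2 - 3 * |p.2 - p.1| - 6 * p.1 * (1 - p.1)) ^ 4 := by
    fun_prop
  rw [(hindep.indepFun (by decide : (0 : Fin 2) ≠ 1)).integral_comp_prodMk
    (hmeas 0).aemeasurable (hmeas 1).aemeasurable hcont.aestronglyMeasurable,
    hunif 0, hunif 1, integral_prod_restrict_Icc hcont zero_le_one zero_le_one]
  have hinner : ∀ x ∈ uIcc (0:ℝ) 1,
      ∫ y in (0:ℝ)..1, (2 - 3 * |y - x| - 6 * x * (1 - x)) ^ 4
        = (2 * (2 - 6 * x * (1 - x)) ^ 5 - (2 - 6 * x * (1 - x) - 3 * x) ^ 5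
            - (2 - 6 * x * (1 - x) - 3 * (1 - x)) ^ 5) / 15 := by
    intro x hx
    rw [uIcc_of_le zero_le_one] at hx
    rw [intervalIntegral.integral_congr (g := fun y => (2 - 6 * x * (1 - x) - 3 * |y - x|) ^ 4)
      fun y _ => by ring, integral_pow_sub_mul_abs_sub _ three_ne_zero 4 hx]
    norm_num
  rw [intervalIntegral.integral_congr hinner]
  ring_nf
  simp (disch := exact Continuous.intervalIntegrable (by fun_prop) _ _) only
    [intervalIntegral.integral_add, intervalIntegral.integral_sub,
      intervalIntegral.integral_mul_const, intervalIntegral.integral_const, integral_pow,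
      integral_id]
  norm_num
end
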